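/- For the quiver Ã₁ with stability θ = (1,−1) and dimension vector m⇄n with m, n > 0, the Harder–Narasimhan types are exactly the tuples d*(k) = (m−k⇄0, k⇄k, 0⇄n−k) for 0 ≤ k ≤ min(m,n) (omitting zero entries), and the HN stratum of type d*(k) consists precisely of the representations (A,B) with rank A = k. -/

import Mathlib

open Module

/-- Subrepresentation `(U,V)` of the `Ã₁`-representation `(A,B)`. -/
def IsSubA1 {m n : ℕ} (A : Matrix (Fin n) (Fin m) ℂ) (B : Matrix (Fin m) (Fin n) ℂ)
    (U : Submodule ℂ (Fin m → ℂ)) (V : Submodule ℂ (Fin n → ℂ)) : Prop :=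
  U.map A.mulVecLin ≤ V ∧ V.map B.mulVecLin ≤ U

/-- Slope for `θ = (1,−1)` of a dimension vector `a⇄b`: `(a−b)/(a+b)`. -/
noncomputable def slA1 (a b : ℚ) : ℚ := (a - b) / (a + b)

/-- `(U,V) : Fin (r+1) → _` is a Harder–Narasimhan filtration of `(A,B)` for
`θ = (1,−1)`: a strictly increasing chain of subrepresentations from `0` to
`(A,B)` whose subquotients are semi-stable of strictly decreasing slopes.
Semi-stability of the subquotient at step `ν` is tested against intermediate
subrepresentations. -/
def IsHNA1 {m n : ℕ} (A : Matrix (Fin n) (Fin m) ℂ) (B : Matrix (Fin m) (Fin n) ℂ)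
    (r : ℕ) (U : Fin (r + 1) → Submodule ℂ (Fin m → ℂ))
    (V : Fin (r + 1) → Submodule ℂ (Fin n → ℂ)) : Prop :=
  U 0 = ⊥ ∧ V 0 = ⊥ ∧ U (Fin.last r) = ⊤ ∧ V (Fin.last r) = ⊤ ∧
  (∀ ν, IsSubA1 A B (U ν) (V ν)) ∧
  (∀ ν : Fin r, U ν.castSucc ≤ U ν.succ ∧ V ν.castSucc ≤ V ν.succ ∧
    ¬(U ν.castSucc = U ν.succ ∧ V ν.castSucc = V ν.succ)) ∧
  (∀ ν : Fin r, ∀ (W : Submodule ℂ (Fin m → ℂ)) (X : Submodule ℂ (Fin n → ℂ)),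
    IsSubA1 A B W X → U ν.castSucc ≤ W → W ≤ U ν.succ → V ν.castSucc ≤ X →
    X ≤ V ν.succ → ¬(W = U ν.castSucc ∧ X = V ν.castSucc) →
    slA1 ((finrank ℂ W : ℚ) - (finrank ℂ (U ν.castSucc) : ℚ))
        ((finrank ℂ X : ℚ) - (finrank ℂ (V ν.castSucc) : ℚ)) ≤
      slA1 ((finrank ℂ (U ν.succ) : ℚ) - (finrank ℂ (U ν.castSucc) : ℚ))
        ((finrank ℂ (V ν.succ) : ℚ) - (finrank ℂ (V ν.castSucc) : ℚ))) ∧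
  StrictAnti (fun ν : Fin r =>
    slA1 ((finrank ℂ (U ν.succ) : ℚ) - (finrank ℂ (U ν.castSucc) : ℚ))
      ((finrank ℂ (V ν.succ) : ℚ) - (finrank ℂ (V ν.castSucc) : ℚ)))

/-- The expected HN type `d*(k) = (m−k⇄0, k⇄k, 0⇄n−k)` with zero entries
omitted. -/
def dstar (m n k : ℕ) : List (ℕ × ℕ) :=
  List.filter (fun p => decide (p ≠ ((0 : ℕ), (0 : ℕ))))
    [(m - k, 0), (k, k), (0, n - k)]

set_option maxHeartbeats 1000000
set_option synthInstance.maxHeartbeats 400000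

lemma slA1_le_one {a b : ℚ} (ha : 0 ≤ a) (hb : 0 ≤ b) : slA1 a b ≤ 1 := by
  unfold slA1
  rcases eq_or_lt_of_le (by positivity : (0:ℚ) ≤ a + b) with h | h
  · rw [← h, div_zero]; norm_num
  · rw [div_le_one h]; linarith

lemma slA1_self (a : ℚ) : slA1 a a = 0 := by unfold slA1; simp

lemma slA1_pos_zero {a : ℚ} (ha : 0 < a) : slA1 a 0 = 1 := by
  unfold slA1; rw [sub_zero, add_zero, div_self ha.ne']

lemma slA1_zero_pos {b : ℚ} (hb : 0 < b) : slA1 0 b = -1 := by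
  unfold slA1; rw [zero_sub, zero_add, neg_div, div_self hb.ne']

lemma slA1_nonpos {a b : ℚ} (ha : 0 ≤ a) (hab : a ≤ b) : slA1 a b ≤ 0 := by
  unfold slA1; apply div_nonpos_of_nonpos_of_nonneg <;> linarith

lemma slA1_lt_one {a b : ℚ} (ha : 0 ≤ a) (hb : 0 < b) : slA1 a b < 1 := by
  unfold slA1; rw [div_lt_one (by linarith)]; linarith

lemma neg_one_le_slA1 {a b : ℚ} (ha : 0 ≤ a) (hb : 0 ≤ b) : -1 ≤ slA1 a b := by
  unfold slA1
  rcases eq_or_lt_of_le (by positivity : (0:ℚ) ≤ a + b) with h | h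
  · rw [← h, div_zero]; norm_num
  · rw [le_div_iff₀ h]; linarith

lemma slA1_forces {a b x : ℚ} (ha : 0 < a) (hx : 0 ≤ x) (hxb : x ≤ b)
    (h : slA1 a x ≤ slA1 a b) : b ≤ x := by
  unfold slA1 at h
  rw [div_le_div_iff₀ (by linarith) (by linarith)] at h
  nlinarith

lemma finrank_map_add_inf_ker {m n : ℕ} (f : (Fin m → ℂ) →ₗ[ℂ] (Fin n → ℂ))
    (W : Submodule ℂ (Fin m → ℂ)) :
    finrank ℂ (W.map f) + finrank ℂ (LinearMap.ker f ⊓ W : Submodule ℂ (Fin m → ℂ)) = finrank ℂ W := by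
  have h := LinearMap.finrank_range_add_finrank_ker (f ∘ₗ W.subtype)
  rw [LinearMap.range_comp, Submodule.range_subtype] at h
  have hker : LinearMap.ker (f ∘ₗ W.subtype) = Submodule.comap W.subtype (LinearMap.ker f ⊓ W) := by
    rw [LinearMap.ker_comp]; ext x; simp [x.2]
  have h2 : finrank ℂ (Submodule.comap W.subtype (LinearMap.ker f ⊓ W)) =
      finrank ℂ (LinearMap.ker f ⊓ W : Submodule ℂ (Fin m → ℂ)) :=
    (Submodule.comapSubtypeEquivOfLe inf_le_right).finrank_eq
  rw [hker, h2] at h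
  exact h

lemma map_inf_comap {m n : ℕ} (f : (Fin m → ℂ) →ₗ[ℂ] (Fin n → ℂ))
    (W : Submodule ℂ (Fin m → ℂ)) (V : Submodule ℂ (Fin n → ℂ)) :
    Submodule.map f (W ⊓ Submodule.comap f V) = Submodule.map f W ⊓ V := by
  ext y; constructor
  · rintro ⟨x, ⟨hxW, hxV⟩, rfl⟩; exact ⟨⟨x, hxW, rfl⟩, hxV⟩
  · rintro ⟨⟨x, hxW, rfl⟩, hyV⟩; exact ⟨x, ⟨hxW, hyV⟩, rfl⟩

lemma dim_eq_of_both {m n : ℕ} (f : (Fin m → ℂ) →ₗ[ℂ] (Fin n → ℂ))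
    (Uc Us : Submodule ℂ (Fin m → ℂ)) (Vc Vs : Submodule ℂ (Fin n → ℂ))
    (hUeq : Uc = Us ⊓ Submodule.comap f Vc)
    (hVeq : Vs = Vc ⊔ Submodule.map f Us) :
    finrank ℂ Us + finrank ℂ Vc = finrank ℂ Vs + finrank ℂ Uc := by
  have e1 := finrank_map_add_inf_ker f Us
  have e2 := finrank_map_add_inf_ker f (Us ⊓ Submodule.comap f Vc)
  have hker2 : LinearMap.ker f ⊓ (Us ⊓ Submodule.comap f Vc) = LinearMap.ker f ⊓ Us := by
    apply le_antisymm
    · exact inf_le_inf_left _ inf_le_left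
    · refine le_inf inf_le_left (le_inf inf_le_right ?_)
      rintro x ⟨hk, _⟩
      simp only [Submodule.mem_comap, LinearMap.mem_ker.mp hk]
      exact Vc.zero_mem
  rw [map_inf_comap, hker2, ← hUeq] at e2
  have e3 := Submodule.finrank_sup_add_finrank_inf_eq Vc (Submodule.map f Us)
  rw [← hVeq] at e3
  rw [inf_comm] at e3
  omega
section Claims
variable {m n r : ℕ} (A : Matrix (Fin n) (Fin m) ℂ) (B : Matrix (Fin m) (Fin n) ℂ)
  (U : Fin (r + 1) → Submodule ℂ (Fin m → ℂ)) (V : Fin (r + 1) → Submodule ℂ (Fin n → ℂ))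

theorem claim1
    (hsub : ∀ ν, IsSubA1 A B (U ν) (V ν))
    (hstrict : ∀ ν : Fin r, U ν.castSucc ≤ U ν.succ ∧ V ν.castSucc ≤ V ν.succ ∧
      ¬(U ν.castSucc = U ν.succ ∧ V ν.castSucc = V ν.succ))
    (hsemi : ∀ ν : Fin r, ∀ (W : Submodule ℂ (Fin m → ℂ)) (X : Submodule ℂ (Fin n → ℂ)),
      IsSubA1 A B W X → U ν.castSucc ≤ W → W ≤ U ν.succ → V ν.castSucc ≤ X →
      X ≤ V ν.succ → ¬(W = U ν.castSucc ∧ X = V ν.castSucc) →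
      slA1 ((finrank ℂ W : ℚ) - (finrank ℂ (U ν.castSucc) : ℚ))
          ((finrank ℂ X : ℚ) - (finrank ℂ (V ν.castSucc) : ℚ)) ≤
        slA1 ((finrank ℂ (U ν.succ) : ℚ) - (finrank ℂ (U ν.castSucc) : ℚ))
          ((finrank ℂ (V ν.succ) : ℚ) - (finrank ℂ (V ν.castSucc) : ℚ)))
    (ν : Fin r) (hb : finrank ℂ (V ν.castSucc) < finrank ℂ (V ν.succ)) :
    U ν.succ ⊓ Submodule.comap A.mulVecLin (V ν.castSucc) ≤ U ν.castSucc := by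
  set f := A.mulVecLin with hfdef
  by_contra hW
  set W := U ν.succ ⊓ Submodule.comap f (V ν.castSucc) with hWdef
  have hUW : U ν.castSucc ≤ W :=
    le_inf (hstrict ν).1 (Submodule.map_le_iff_le_comap.mp (hsub ν.castSucc).1)
  have hlt : U ν.castSucc < W := lt_of_le_not_ge hUW hW
  clear hW
  have hkey := hsemi ν W (V ν.castSucc)
    ⟨Submodule.map_le_iff_le_comap.mpr inf_le_right, le_trans (hsub ν.castSucc).2 hUW⟩
    hUW inf_le_left le_rfl (hstrict ν).2.1 (fun h => hlt.ne' h.1)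
  rw [sub_self] at hkey
  have hfr : finrank ℂ (U ν.castSucc) < finrank ℂ W := Submodule.finrank_lt_finrank_of_lt hlt
  have hfr' : (0:ℚ) < (finrank ℂ W : ℚ) - (finrank ℂ (U ν.castSucc) : ℚ) := by
    have : (finrank ℂ (U ν.castSucc) : ℚ) < (finrank ℂ W : ℚ) := by exact_mod_cast hfr
    linarith
  rw [slA1_pos_zero hfr'] at hkey
  have hUmono : finrank ℂ (U ν.castSucc) ≤ finrank ℂ (U ν.succ) :=
    Submodule.finrank_mono (hstrict ν).1
  have h1 : (0:ℚ) ≤ (finrank ℂ (U ν.succ) : ℚ) - (finrank ℂ (U ν.castSucc) : ℚ) := by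
    have : (finrank ℂ (U ν.castSucc) : ℚ) ≤ (finrank ℂ (U ν.succ) : ℚ) := by exact_mod_cast hUmono
    linarith
  have h2 : (0:ℚ) < (finrank ℂ (V ν.succ) : ℚ) - (finrank ℂ (V ν.castSucc) : ℚ) := by
    have : (finrank ℂ (V ν.castSucc) : ℚ) < (finrank ℂ (V ν.succ) : ℚ) := by exact_mod_cast hb
    linarith
  have := slA1_lt_one h1 h2
  linarith

theorem claim2
    (hsub : ∀ ν, IsSubA1 A B (U ν) (V ν))
    (hstrict : ∀ ν : Fin r, U ν.castSucc ≤ U ν.succ ∧ V ν.castSucc ≤ V ν.succ ∧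
      ¬(U ν.castSucc = U ν.succ ∧ V ν.castSucc = V ν.succ))
    (hsemi : ∀ ν : Fin r, ∀ (W : Submodule ℂ (Fin m → ℂ)) (X : Submodule ℂ (Fin n → ℂ)),
      IsSubA1 A B W X → U ν.castSucc ≤ W → W ≤ U ν.succ → V ν.castSucc ≤ X →
      X ≤ V ν.succ → ¬(W = U ν.castSucc ∧ X = V ν.castSucc) →
      slA1 ((finrank ℂ W : ℚ) - (finrank ℂ (U ν.castSucc) : ℚ))
          ((finrank ℂ X : ℚ) - (finrank ℂ (V ν.castSucc) : ℚ)) ≤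
        slA1 ((finrank ℂ (U ν.succ) : ℚ) - (finrank ℂ (U ν.castSucc) : ℚ))
          ((finrank ℂ (V ν.succ) : ℚ) - (finrank ℂ (V ν.castSucc) : ℚ)))
    (ν : Fin r) (ha : finrank ℂ (U ν.castSucc) < finrank ℂ (U ν.succ)) :
    V ν.succ = V ν.castSucc ⊔ Submodule.map A.mulVecLin (U ν.succ) := by
  set f := A.mulVecLin with hfdef
  set X := V ν.castSucc ⊔ Submodule.map f (U ν.succ) with hXdef
  have hXle : X ≤ V ν.succ := sup_le (hstrict ν).2.1 (hsub ν.succ).1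
  refine (Submodule.eq_of_le_of_finrank_le hXle ?_).symm
  have hkey := hsemi ν (U ν.succ) X
    ⟨le_sup_right, le_trans (Submodule.map_mono hXle) (hsub ν.succ).2⟩
    (hstrict ν).1 le_rfl le_sup_left hXle
    (fun h => ha.ne' (by rw [h.1]))
  have ha' : (0:ℚ) < (finrank ℂ (U ν.succ) : ℚ) - (finrank ℂ (U ν.castSucc) : ℚ) := by
    have : (finrank ℂ (U ν.castSucc) : ℚ) < (finrank ℂ (U ν.succ) : ℚ) := by exact_mod_cast ha
    linarith
  have hx : (0:ℚ) ≤ (finrank ℂ X : ℚ) - (finrank ℂ (V ν.castSucc) : ℚ) := by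
    have : (finrank ℂ (V ν.castSucc) : ℚ) ≤ (finrank ℂ X : ℚ) := by
      exact_mod_cast Submodule.finrank_mono (le_sup_left : V ν.castSucc ≤ X)
    linarith
  have hxb : (finrank ℂ X : ℚ) - (finrank ℂ (V ν.castSucc) : ℚ) ≤
      (finrank ℂ (V ν.succ) : ℚ) - (finrank ℂ (V ν.castSucc) : ℚ) := by
    have : (finrank ℂ X : ℚ) ≤ (finrank ℂ (V ν.succ) : ℚ) := by
      exact_mod_cast Submodule.finrank_mono hXle
    linarith
  have := slA1_forces ha' hx hxb hkey
  have hfin : (finrank ℂ (V ν.succ) : ℚ) ≤ (finrank ℂ X : ℚ) := by linarith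
  exact_mod_cast hfin
end Claims

-- appended to base+claims
theorem A1_type {m n : ℕ} (hm : 0 < m) (hn : 0 < n)
    (A : Matrix (Fin n) (Fin m) ℂ) (B : Matrix (Fin m) (Fin n) ℂ)
    (r : ℕ) (U : Fin (r + 1) → Submodule ℂ (Fin m → ℂ))
    (V : Fin (r + 1) → Submodule ℂ (Fin n → ℂ)) (h : IsHNA1 A B r U V) :
    List.ofFn (fun ν : Fin r =>
        ((finrank ℂ (U ν.succ) - finrank ℂ (U ν.castSucc),
          finrank ℂ (V ν.succ) - finrank ℂ (V ν.castSucc)) : ℕ × ℕ)) =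
      dstar m n A.rank := by
  obtain ⟨hU0, hV0, hUt, hVt, hsub, hstrict, hsemi, hanti⟩ := h
  have hc1 := claim1 A B U V hsub hstrict hsemi
  have hc2 := claim2 A B U V hsub hstrict hsemi
  have hUm : ∀ ν : Fin r, finrank ℂ (U ν.castSucc) ≤ finrank ℂ (U ν.succ) :=
    fun ν => Submodule.finrank_mono (hstrict ν).1
  have hVm : ∀ ν : Fin r, finrank ℂ (V ν.castSucc) ≤ finrank ℂ (V ν.succ) :=
    fun ν => Submodule.finrank_mono (hstrict ν).2.1
  have hsum : ∀ ν : Fin r, finrank ℂ (U ν.castSucc) < finrank ℂ (U ν.succ) ∨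
      finrank ℂ (V ν.castSucc) < finrank ℂ (V ν.succ) := by
    intro ν; by_contra hcon; push_neg at hcon
    exact (hstrict ν).2.2 ⟨Submodule.eq_of_le_of_finrank_le (hstrict ν).1 hcon.1,
      Submodule.eq_of_le_of_finrank_le (hstrict ν).2.1 hcon.2⟩
  set sl : Fin r → ℚ := fun ν =>
    slA1 ((finrank ℂ (U ν.succ) : ℚ) - (finrank ℂ (U ν.castSucc) : ℚ))
      ((finrank ℂ (V ν.succ) : ℚ) - (finrank ℂ (V ν.castSucc) : ℚ)) with hsl
  have hsl_le : ∀ ν, sl ν ≤ 1 := by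
    intro ν
    apply slA1_le_one
    · have : (finrank ℂ (U ν.castSucc) : ℚ) ≤ (finrank ℂ (U ν.succ) : ℚ) := by exact_mod_cast hUm ν
      linarith
    · have : (finrank ℂ (V ν.castSucc) : ℚ) ≤ (finrank ℂ (V ν.succ) : ℚ) := by exact_mod_cast hVm ν
      linarith
  have hsl_ge : ∀ ν, -1 ≤ sl ν := by
    intro ν
    apply neg_one_le_slA1
    · have : (finrank ℂ (U ν.castSucc) : ℚ) ≤ (finrank ℂ (U ν.succ) : ℚ) := by exact_mod_cast hUm ν
      linarith
    · have : (finrank ℂ (V ν.castSucc) : ℚ) ≤ (finrank ℂ (V ν.succ) : ℚ) := by exact_mod_cast hVm ν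
      linarith
  have hsl1 : ∀ ν : Fin r, finrank ℂ (V ν.castSucc) = finrank ℂ (V ν.succ) → sl ν = 1 := by
    intro ν hb
    have ha : finrank ℂ (U ν.castSucc) < finrank ℂ (U ν.succ) := by
      rcases hsum ν with h | h
      · exact h
      · omega
    rw [hsl]
    simp only
    rw [hb, sub_self]
    apply slA1_pos_zero
    have : (finrank ℂ (U ν.castSucc) : ℚ) < (finrank ℂ (U ν.succ) : ℚ) := by exact_mod_cast ha
    linarith
  have hslm1 : ∀ ν : Fin r, finrank ℂ (U ν.castSucc) = finrank ℂ (U ν.succ) → sl ν = -1 := by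
    intro ν ha
    have hb : finrank ℂ (V ν.castSucc) < finrank ℂ (V ν.succ) := by
      rcases hsum ν with h | h
      · omega
      · exact h
    rw [hsl]
    simp only
    rw [ha, sub_self]
    apply slA1_zero_pos
    have : (finrank ℂ (V ν.castSucc) : ℚ) < (finrank ℂ (V ν.succ) : ℚ) := by exact_mod_cast hb
    linarith
  have hsl0 : ∀ ν : Fin r, finrank ℂ (U ν.castSucc) < finrank ℂ (U ν.succ) →
      finrank ℂ (V ν.castSucc) < finrank ℂ (V ν.succ) → sl ν = 0 := by
    intro ν ha hb
    have hUeq : U ν.castSucc = U ν.succ ⊓ Submodule.comap A.mulVecLin (V ν.castSucc) :=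
      le_antisymm (le_inf (hstrict ν).1 (Submodule.map_le_iff_le_comap.mp (hsub ν.castSucc).1))
        (hc1 ν hb)
    have heq := dim_eq_of_both A.mulVecLin (U ν.castSucc) (U ν.succ) (V ν.castSucc) (V ν.succ)
      hUeq (hc2 ν ha)
    rw [hsl]
    simp only
    have : (finrank ℂ (U ν.succ) : ℚ) - (finrank ℂ (U ν.castSucc) : ℚ) =
        (finrank ℂ (V ν.succ) : ℚ) - (finrank ℂ (V ν.castSucc) : ℚ) := by
      have : (finrank ℂ (U ν.succ) : ℚ) + (finrank ℂ (V ν.castSucc) : ℚ) =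
          (finrank ℂ (V ν.succ) : ℚ) + (finrank ℂ (U ν.castSucc) : ℚ) := by exact_mod_cast heq
      linarith
    rw [this, slA1_self]
  have hb_pos : ∀ ν : Fin r, 0 < ν.val → finrank ℂ (V ν.castSucc) < finrank ℂ (V ν.succ) := by
    intro ν hν; by_contra hcon; push_neg at hcon
    have h1 : sl ν = 1 := hsl1 ν (le_antisymm (hVm ν) hcon)
    have hlt := hanti (show (⟨0, ν.pos⟩ : Fin r) < ν from hν)
    have := hsl_le ⟨0, ν.pos⟩
    rw [h1] at hlt
    exact absurd (lt_of_le_of_lt this hlt) (lt_irrefl _)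
  have ha_pos : ∀ ν : Fin r, ν.val + 2 ≤ r → finrank ℂ (U ν.castSucc) < finrank ℂ (U ν.succ) := by
    intro ν hν; by_contra hcon; push_neg at hcon
    have h1 : sl ν = -1 := hslm1 ν (le_antisymm (hUm ν) hcon)
    have hlt := hanti (show ν < (⟨r - 1, by omega⟩ : Fin r) from by
      simp [Fin.lt_def]; omega)
    have := hsl_ge ⟨r - 1, by omega⟩
    rw [h1] at hlt
    exact absurd (lt_of_lt_of_le hlt this) (by linarith)
  have hr1 : 1 ≤ r := by
    by_contra hcon; push_neg at hcon
    interval_cases r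
    have hl0 : Fin.last 0 = (0 : Fin 1) := rfl
    rw [hl0, hU0] at hUt
    have : finrank ℂ (⊥ : Submodule ℂ (Fin m → ℂ)) = finrank ℂ (⊤ : Submodule ℂ (Fin m → ℂ)) := by
      rw [hUt]
    rw [finrank_bot, finrank_top, Module.finrank_fin_fun] at this
    omega
  have hr3 : r ≤ 3 := by
    by_contra hcon; push_neg at hcon
    have hs1 : sl ⟨1, by omega⟩ = 0 :=
      hsl0 _ (ha_pos _ (by simp; omega)) (hb_pos _ (by simp))
    have hs2 : sl ⟨2, by omega⟩ = 0 :=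
      hsl0 _ (ha_pos _ (by simp; omega)) (hb_pos _ (by simp))
    have := hanti (show (⟨1, by omega⟩ : Fin r) < ⟨2, by omega⟩ from by simp [Fin.lt_def])
    rw [hs1, hs2] at this
    exact absurd this (lt_irrefl _)
  -- rank facts
  have hrank : A.rank = finrank ℂ (LinearMap.range A.mulVecLin) := rfl
  have hrn : finrank ℂ (LinearMap.range A.mulVecLin) +
      finrank ℂ (LinearMap.ker A.mulVecLin) = m := by
    rw [LinearMap.finrank_range_add_finrank_ker A.mulVecLin, Module.finrank_fin_fun]
  interval_cases r
  · -- r = 1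
    have e0c : (0 : Fin 1).castSucc = (0 : Fin 2) := rfl
    have e0s : (0 : Fin 1).succ = (1 : Fin 2) := rfl
    have hU1 : U 1 = ⊤ := hUt
    have hV1 : V 1 = ⊤ := hVt
    have fU0 : finrank ℂ (U 0) = 0 := by rw [hU0]; exact finrank_bot ℂ _
    have fV0 : finrank ℂ (V 0) = 0 := by rw [hV0]; exact finrank_bot ℂ _
    have fU1 : finrank ℂ (U 1) = m := by rw [hU1, finrank_top, Module.finrank_fin_fun]
    have fV1 : finrank ℂ (V 1) = n := by rw [hV1, finrank_top, Module.finrank_fin_fun]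
    have ha : finrank ℂ (U (0 : Fin 1).castSucc) < finrank ℂ (U (0 : Fin 1).succ) := by
      rw [e0c, e0s, fU0, fU1]; omega
    have hb : finrank ℂ (V (0 : Fin 1).castSucc) < finrank ℂ (V (0 : Fin 1).succ) := by
      rw [e0c, e0s, fV0, fV1]; omega
    have hker := hc1 0 hb
    rw [e0c, e0s, hU1, hV0, hU0] at hker
    have hkerbot : LinearMap.ker A.mulVecLin = ⊥ := by
      refine le_bot_iff.mp (fun x hx => hker ⟨Submodule.mem_top, ?_⟩)
      simpa using hx
    have hrange := hc2 0 ha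
    rw [e0c, e0s, hV0, hU1, hV1] at hrange
    have hrtop : LinearMap.range A.mulVecLin = ⊤ := by
      rw [← Submodule.map_top]
      rw [bot_sup_eq] at hrange
      exact hrange.symm
    have hk_n : A.rank = n := by rw [hrank, hrtop, finrank_top, Module.finrank_fin_fun]
    have hk_m : A.rank = m := by
      have h0 : finrank ℂ (LinearMap.ker A.mulVecLin) = 0 := by rw [hkerbot]; exact finrank_bot ℂ _
      omega
    have hmn : n = m := by omega
    subst hmn
    have hds : dstar n n A.rank = [(n, n)] := by
      rw [hk_m]
      simp [dstar, Nat.sub_self, hn.ne']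
    rw [hds]
    have hofn : (List.ofFn fun ν : Fin 1 =>
        ((finrank ℂ (U ν.succ) - finrank ℂ (U ν.castSucc),
          finrank ℂ (V ν.succ) - finrank ℂ (V ν.castSucc)) : ℕ × ℕ)) =
        [(finrank ℂ (U 1) - finrank ℂ (U 0), finrank ℂ (V 1) - finrank ℂ (V 0))] := rfl
    rw [hofn, fU0, fU1, fV0, fV1]
    simp

  · -- r = 2
    have e0c : (0 : Fin 2).castSucc = (0 : Fin 3) := rfl
    have e0s : (0 : Fin 2).succ = (1 : Fin 3) := rfl
    have e1c : (1 : Fin 2).castSucc = (1 : Fin 3) := rfl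
    have e1s : (1 : Fin 2).succ = (2 : Fin 3) := rfl
    have hU2 : U 2 = ⊤ := hUt
    have hV2 : V 2 = ⊤ := hVt
    have fU0 : finrank ℂ (U 0) = 0 := by rw [hU0]; exact finrank_bot ℂ _
    have fV0 : finrank ℂ (V 0) = 0 := by rw [hV0]; exact finrank_bot ℂ _
    have fU2 : finrank ℂ (U 2) = m := by rw [hU2, finrank_top, Module.finrank_fin_fun]
    have fV2 : finrank ℂ (V 2) = n := by rw [hV2, finrank_top, Module.finrank_fin_fun]
    have ha0 : finrank ℂ (U (0 : Fin 2).castSucc) < finrank ℂ (U (0 : Fin 2).succ) :=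
      ha_pos 0 (by decide)
    have hb1 : finrank ℂ (V (1 : Fin 2).castSucc) < finrank ℂ (V (1 : Fin 2).succ) :=
      hb_pos 1 (by decide)
    rcases lt_or_eq_of_le (hVm 0) with hb0 | hb0
    · -- b0 > 0 : step 0 has both positive
      rcases lt_or_eq_of_le (hUm 1) with ha1 | ha1
      · -- a1 > 0 : both steps slope 0, contradiction
        have h0 := hsl0 0 ha0 hb0
        have h1 := hsl0 1 ha1 hb1
        have := hanti (show (0 : Fin 2) < 1 by decide)
        rw [h0, h1] at this
        exact absurd this (lt_irrefl _)
      · -- a1 = 0 : U 1 = ⊤, pattern [0, -1], k = m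
        rw [e1c, e1s, fU2] at ha1
        have hU1 : U 1 = ⊤ := Submodule.eq_top_of_finrank_eq (by rw [ha1, Module.finrank_fin_fun])
        have hker := hc1 0 hb0
        rw [e0c, e0s, hU1, hV0, hU0] at hker
        have hkerbot : LinearMap.ker A.mulVecLin = ⊥ := by
          refine le_bot_iff.mp (fun x hx => hker ⟨Submodule.mem_top, ?_⟩)
          simpa using hx
        have hk_m : A.rank = m := by
          have h0 : finrank ℂ (LinearMap.ker A.mulVecLin) = 0 := by
            rw [hkerbot]; exact finrank_bot ℂ _
          omega
        have hrange := hc2 0 ha0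
        rw [e0c, e0s, hV0, hU1] at hrange
        have fV1 : finrank ℂ (V 1) = A.rank := by
          rw [hrange, bot_sup_eq, Submodule.map_top, hrank]
        have hkn : A.rank < n := by
          rw [e1c, e1s, fV1, fV2] at hb1; exact hb1
        have hds : dstar m n A.rank = [(m, m), (0, n - m)] := by
          rw [hk_m]
          simp [dstar, Nat.sub_self, hm.ne', Nat.sub_ne_zero_of_lt (hk_m ▸ hkn)]
        rw [hds]
        have fU1 : finrank ℂ (U 1) = m := ha1
        have hofn : (List.ofFn fun ν : Fin 2 =>
                ((finrank ℂ (U ν.succ) - finrank ℂ (U ν.castSucc),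
                  finrank ℂ (V ν.succ) - finrank ℂ (V ν.castSucc)) : ℕ × ℕ)) =
                [(finrank ℂ (U 1) - finrank ℂ (U 0), finrank ℂ (V 1) - finrank ℂ (V 0)),
                 (finrank ℂ (U 2) - finrank ℂ (U 1), finrank ℂ (V 2) - finrank ℂ (V 1))] := rfl
        rw [hofn, fU0, fU1, fU2, fV0, fV1, fV2]
        simp [Prod.ext_iff]
        try omega
    · -- b0 = 0 : V 1 = ⊥
      rw [e0c, e0s] at hb0
      have hV1 : V 1 = ⊥ := by
        have : V 0 = V 1 := Submodule.eq_of_le_of_finrank_le (by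
          have := (hstrict 0).2.1; rwa [e0c, e0s] at this) (le_of_eq hb0.symm)
        rw [← this, hV0]
      rcases lt_or_eq_of_le (hUm 1) with ha1 | ha1
      · -- a1 > 0 : pattern [1, 0], k = n
        have hker := hc1 1 hb1
        rw [e1c, e1s, hU2, hV1] at hker
        have hker' : LinearMap.ker A.mulVecLin ≤ U 1 := by
          intro x hx; apply hker; exact ⟨Submodule.mem_top, by simpa using hx⟩
        have hsub1 := (hsub 1).1
        have hU1ker : U 1 ≤ LinearMap.ker A.mulVecLin := by
          intro x hx
          have : A.mulVecLin x ∈ V 1 := hsub1 ⟨x, hx, rfl⟩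
          rw [hV1] at this
          simpa using this
        have hU1 : U 1 = LinearMap.ker A.mulVecLin := le_antisymm hU1ker hker'
        have hrange := hc2 1 ha1
        rw [e1c, e1s, hV1, hU2, hV2] at hrange
        have hrtop : LinearMap.range A.mulVecLin = ⊤ := by
          rw [← Submodule.map_top]
          rw [bot_sup_eq] at hrange
          exact hrange.symm
        have hk_n : A.rank = n := by rw [hrank, hrtop, finrank_top, Module.finrank_fin_fun]
        have fU1 : finrank ℂ (U 1) = m - A.rank := by
          have h0 : finrank ℂ (U 1) = finrank ℂ (LinearMap.ker A.mulVecLin) := by rw [hU1]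
          omega
        have hkm : A.rank < m := by
          rw [e0c, e0s, fU0, fU1] at ha0; omega
        have fV1 : finrank ℂ (V 1) = 0 := by rw [hV1]; exact finrank_bot ℂ _
        have hds : dstar m n A.rank = [(m - A.rank, 0), (A.rank, A.rank)] := by
          rw [hk_n]
          simp [dstar, Nat.sub_self, hn.ne', Nat.sub_ne_zero_of_lt (hk_n ▸ hkm)]
        rw [hds]
        have hofn : (List.ofFn fun ν : Fin 2 =>
            ((finrank ℂ (U ν.succ) - finrank ℂ (U ν.castSucc),
              finrank ℂ (V ν.succ) - finrank ℂ (V ν.castSucc)) : ℕ × ℕ)) =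
            [(finrank ℂ (U 1) - finrank ℂ (U 0), finrank ℂ (V 1) - finrank ℂ (V 0)),
             (finrank ℂ (U 2) - finrank ℂ (U 1), finrank ℂ (V 2) - finrank ℂ (V 1))] := rfl
        rw [hofn, fU0, fU1, fU2, fV0, fV1, fV2]
        simp [Prod.ext_iff]
        try omega
      · -- a1 = 0 : U 1 = ⊤, pattern [1, -1], k = 0
        rw [e1c, e1s, fU2] at ha1
        have hU1 : U 1 = ⊤ := Submodule.eq_top_of_finrank_eq (by rw [ha1, Module.finrank_fin_fun])
        have hsub1 := (hsub 1).1
        have hrbot : LinearMap.range A.mulVecLin = ⊥ := by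
          refine le_bot_iff.mp ?_
          rintro y ⟨x, rfl⟩
          have : A.mulVecLin x ∈ V 1 := hsub1 ⟨x, by rw [hU1]; exact Submodule.mem_top, rfl⟩
          rw [hV1] at this
          simpa using this
        have hk0 : A.rank = 0 := by rw [hrank, hrbot]; exact finrank_bot ℂ _
        have fU1 : finrank ℂ (U 1) = m := ha1
        have fV1 : finrank ℂ (V 1) = 0 := by rw [hV1]; exact finrank_bot ℂ _
        have hds : dstar m n A.rank = [(m, 0), (0, n)] := by
          rw [hk0]
          simp [dstar, hm.ne', hn.ne']
        rw [hds]
        have hofn : (List.ofFn fun ν : Fin 2 =>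
            ((finrank ℂ (U ν.succ) - finrank ℂ (U ν.castSucc),
              finrank ℂ (V ν.succ) - finrank ℂ (V ν.castSucc)) : ℕ × ℕ)) =
            [(finrank ℂ (U 1) - finrank ℂ (U 0), finrank ℂ (V 1) - finrank ℂ (V 0)),
             (finrank ℂ (U 2) - finrank ℂ (U 1), finrank ℂ (V 2) - finrank ℂ (V 1))] := rfl
        rw [hofn, fU0, fU1, fU2, fV0, fV1, fV2]
        simp [Prod.ext_iff]
        try omega
  · -- r = 3
    have e0c : (0 : Fin 3).castSucc = (0 : Fin 4) := rfl
    have e0s : (0 : Fin 3).succ = (1 : Fin 4) := rfl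
    have e1c : (1 : Fin 3).castSucc = (1 : Fin 4) := rfl
    have e1s : (1 : Fin 3).succ = (2 : Fin 4) := rfl
    have e2c : (2 : Fin 3).castSucc = (2 : Fin 4) := rfl
    have e2s : (2 : Fin 3).succ = (3 : Fin 4) := rfl
    have hU3 : U 3 = ⊤ := hUt
    have hV3 : V 3 = ⊤ := hVt
    have fU0 : finrank ℂ (U 0) = 0 := by rw [hU0]; exact finrank_bot ℂ _
    have fV0 : finrank ℂ (V 0) = 0 := by rw [hV0]; exact finrank_bot ℂ _
    have fU3 : finrank ℂ (U 3) = m := by rw [hU3, finrank_top, Module.finrank_fin_fun]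
    have fV3 : finrank ℂ (V 3) = n := by rw [hV3, finrank_top, Module.finrank_fin_fun]
    have ha0 : finrank ℂ (U (0 : Fin 3).castSucc) < finrank ℂ (U (0 : Fin 3).succ) :=
      ha_pos 0 (by decide)
    have ha1 : finrank ℂ (U (1 : Fin 3).castSucc) < finrank ℂ (U (1 : Fin 3).succ) :=
      ha_pos 1 (by decide)
    have hb1 : finrank ℂ (V (1 : Fin 3).castSucc) < finrank ℂ (V (1 : Fin 3).succ) :=
      hb_pos 1 (by decide)
    have hb2 : finrank ℂ (V (2 : Fin 3).castSucc) < finrank ℂ (V (2 : Fin 3).succ) :=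
      hb_pos 2 (by decide)
    have hb0 : finrank ℂ (V (0 : Fin 3).castSucc) = finrank ℂ (V (0 : Fin 3).succ) := by
      rcases lt_or_eq_of_le (hVm 0) with hb0 | hb0
      · exfalso
        have h0 := hsl0 0 ha0 hb0
        have h1 := hsl0 1 ha1 hb1
        have := hanti (show (0 : Fin 3) < 1 by decide)
        rw [h0, h1] at this
        exact absurd this (lt_irrefl _)
      · exact hb0
    have ha2 : finrank ℂ (U (2 : Fin 3).castSucc) = finrank ℂ (U (2 : Fin 3).succ) := by
      rcases lt_or_eq_of_le (hUm 2) with ha2 | ha2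
      · exfalso
        have h1 := hsl0 1 ha1 hb1
        have h2 := hsl0 2 ha2 hb2
        have := hanti (show (1 : Fin 3) < 2 by decide)
        rw [h1, h2] at this
        exact absurd this (lt_irrefl _)
      · exact ha2
    rw [e0c, e0s] at hb0
    have hV1 : V 1 = ⊥ := by
      have : V 0 = V 1 := Submodule.eq_of_le_of_finrank_le (by
        have := (hstrict 0).2.1; rwa [e0c, e0s] at this) (le_of_eq hb0.symm)
      rw [← this, hV0]
    rw [e2c, e2s, fU3] at ha2
    have hU2 : U 2 = ⊤ := Submodule.eq_top_of_finrank_eq (by rw [ha2, Module.finrank_fin_fun])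
    have hker := hc1 1 hb1
    rw [e1c, e1s, hU2, hV1] at hker
    have hker' : LinearMap.ker A.mulVecLin ≤ U 1 := by
      intro x hx; apply hker; exact ⟨Submodule.mem_top, by simpa using hx⟩
    have hsub1 := (hsub 1).1
    have hU1ker : U 1 ≤ LinearMap.ker A.mulVecLin := by
      intro x hx
      have : A.mulVecLin x ∈ V 1 := hsub1 ⟨x, hx, rfl⟩
      rw [hV1] at this
      simpa using this
    have hU1 : U 1 = LinearMap.ker A.mulVecLin := le_antisymm hU1ker hker'
    have hrange := hc2 1 ha1
    rw [e1c, e1s, hV1, hU2] at hrange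
    have fV2 : finrank ℂ (V 2) = A.rank := by
      rw [hrange, bot_sup_eq, Submodule.map_top, hrank]
    have fU1 : finrank ℂ (U 1) = m - A.rank := by
      have h0 : finrank ℂ (U 1) = finrank ℂ (LinearMap.ker A.mulVecLin) := by rw [hU1]
      omega
    have fU2 : finrank ℂ (U 2) = m := by rw [hU2, finrank_top, Module.finrank_fin_fun]
    have fV1 : finrank ℂ (V 1) = 0 := by rw [hV1]; exact finrank_bot ℂ _
    have hkm : A.rank < m := by
      rw [e0c, e0s, fU0, fU1] at ha0; omega
    have hk0 : 0 < A.rank := by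
      rw [e1c, e1s, fU1, fU2] at ha1; omega
    have hkn : A.rank < n := by
      rw [e2c, e2s, fV2, fV3] at hb2; omega
    have hds : dstar m n A.rank = [(m - A.rank, 0), (A.rank, A.rank), (0, n - A.rank)] := by
      simp [dstar, Nat.sub_ne_zero_of_lt hkm, Nat.sub_ne_zero_of_lt hkn, hk0.ne']
    rw [hds]
    have hofn : (List.ofFn fun ν : Fin 3 =>
        ((finrank ℂ (U ν.succ) - finrank ℂ (U ν.castSucc),
          finrank ℂ (V ν.succ) - finrank ℂ (V ν.castSucc)) : ℕ × ℕ)) =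
        [(finrank ℂ (U 1) - finrank ℂ (U 0), finrank ℂ (V 1) - finrank ℂ (V 0)),
         (finrank ℂ (U 2) - finrank ℂ (U 1), finrank ℂ (V 2) - finrank ℂ (V 1)),
         (finrank ℂ (U 3) - finrank ℂ (U 2), finrank ℂ (V 3) - finrank ℂ (V 2))] := rfl
    rw [hofn, fU0, fU1, fU2, fU3, fV0, fV1, fV2, fV3]
    simp [Prod.ext_iff]
    try omega
-- step lemmas for existence
section ExistLemmas
variable {m n : ℕ} (A : Matrix (Fin n) (Fin m) ℂ) (B : Matrix (Fin m) (Fin n) ℂ)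

lemma semi_step_one (Uc Us : Submodule ℂ (Fin m → ℂ)) (Vc Vs : Submodule ℂ (Fin n → ℂ))
    (hV : finrank ℂ Vc = finrank ℂ Vs) (hU : finrank ℂ Uc < finrank ℂ Us) :
    ∀ (W : Submodule ℂ (Fin m → ℂ)) (X : Submodule ℂ (Fin n → ℂ)),
      IsSubA1 A B W X → Uc ≤ W → W ≤ Us → Vc ≤ X → X ≤ Vs → ¬(W = Uc ∧ X = Vc) →
      slA1 ((finrank ℂ W : ℚ) - (finrank ℂ Uc : ℚ)) ((finrank ℂ X : ℚ) - (finrank ℂ Vc : ℚ)) ≤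
        slA1 ((finrank ℂ Us : ℚ) - (finrank ℂ Uc : ℚ)) ((finrank ℂ Vs : ℚ) - (finrank ℂ Vc : ℚ)) := by
  intro W X _ hUcW _ hVcX _ _
  have hR : slA1 ((finrank ℂ Us : ℚ) - (finrank ℂ Uc : ℚ))
      ((finrank ℂ Vs : ℚ) - (finrank ℂ Vc : ℚ)) = 1 := by
    rw [← hV, sub_self]
    exact slA1_pos_zero (by
      have : (finrank ℂ Uc : ℚ) < (finrank ℂ Us : ℚ) := by exact_mod_cast hU
      linarith)
  rw [hR]
  apply slA1_le_one
  · have : (finrank ℂ Uc : ℚ) ≤ (finrank ℂ W : ℚ) := by exact_mod_cast Submodule.finrank_mono hUcW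
    linarith
  · have : (finrank ℂ Vc : ℚ) ≤ (finrank ℂ X : ℚ) := by exact_mod_cast Submodule.finrank_mono hVcX
    linarith

lemma semi_step_zero (Uc : Submodule ℂ (Fin m → ℂ)) (hUc : Uc = LinearMap.ker A.mulVecLin)
    (Us : Submodule ℂ (Fin m → ℂ)) (Vs : Submodule ℂ (Fin n → ℂ))
    (hq : (finrank ℂ Us : ℚ) - (finrank ℂ Uc : ℚ) =
      (finrank ℂ Vs : ℚ) - (finrank ℂ (⊥ : Submodule ℂ (Fin n → ℂ)) : ℚ)) :
    ∀ (W : Submodule ℂ (Fin m → ℂ)) (X : Submodule ℂ (Fin n → ℂ)),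
      IsSubA1 A B W X → Uc ≤ W → W ≤ Us → (⊥ : Submodule ℂ (Fin n → ℂ)) ≤ X → X ≤ Vs →
      ¬(W = Uc ∧ X = ⊥) →
      slA1 ((finrank ℂ W : ℚ) - (finrank ℂ Uc : ℚ))
          ((finrank ℂ X : ℚ) - (finrank ℂ (⊥ : Submodule ℂ (Fin n → ℂ)) : ℚ)) ≤
        slA1 ((finrank ℂ Us : ℚ) - (finrank ℂ Uc : ℚ))
          ((finrank ℂ Vs : ℚ) - (finrank ℂ (⊥ : Submodule ℂ (Fin n → ℂ)) : ℚ)) := by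
  intro W X hWX hUcW _ _ _ _
  rw [hq, slA1_self]
  have hmono : finrank ℂ (Submodule.map A.mulVecLin W) ≤ finrank ℂ X :=
    Submodule.finrank_mono hWX.1
  have hdim := finrank_map_add_inf_ker A.mulVecLin W
  have hker : LinearMap.ker A.mulVecLin ⊓ W = LinearMap.ker A.mulVecLin :=
    inf_eq_left.mpr (hUc ▸ hUcW)
  rw [hker] at hdim
  apply slA1_nonpos
  · have : (finrank ℂ Uc : ℚ) ≤ (finrank ℂ W : ℚ) := by exact_mod_cast Submodule.finrank_mono hUcW
    linarith
  · rw [finrank_bot, Nat.cast_zero, sub_zero, hUc]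
    have : finrank ℂ W ≤ finrank ℂ X + finrank ℂ (LinearMap.ker A.mulVecLin) := by omega
    have h2 : (finrank ℂ W : ℚ) ≤ (finrank ℂ X : ℚ) + (finrank ℂ (LinearMap.ker A.mulVecLin) : ℚ) := by
      exact_mod_cast this
    linarith

lemma semi_step_neg (R Vs : Submodule ℂ (Fin n → ℂ)) (hRV : finrank ℂ R < finrank ℂ Vs) :
    ∀ (W : Submodule ℂ (Fin m → ℂ)) (X : Submodule ℂ (Fin n → ℂ)),
      IsSubA1 A B W X → (⊤ : Submodule ℂ (Fin m → ℂ)) ≤ W → W ≤ ⊤ → R ≤ X → X ≤ Vs →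
      ¬(W = ⊤ ∧ X = R) →
      slA1 ((finrank ℂ W : ℚ) - (finrank ℂ (⊤ : Submodule ℂ (Fin m → ℂ)) : ℚ))
          ((finrank ℂ X : ℚ) - (finrank ℂ R : ℚ)) ≤
        slA1 ((finrank ℂ (⊤ : Submodule ℂ (Fin m → ℂ)) : ℚ) -
            (finrank ℂ (⊤ : Submodule ℂ (Fin m → ℂ)) : ℚ))
          ((finrank ℂ Vs : ℚ) - (finrank ℂ R : ℚ)) := by
  intro W X _ hTW _ hRX _ hne
  have hW : W = ⊤ := top_le_iff.mp hTW
  have hXR : X ≠ R := fun h => hne ⟨hW, h⟩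
  have hRlt : R < X := lt_of_le_of_ne hRX (fun h => hXR h.symm)
  have hfr : finrank ℂ R < finrank ℂ X := Submodule.finrank_lt_finrank_of_lt hRlt
  rw [sub_self, hW, sub_self]
  rw [slA1_zero_pos (by
    have : (finrank ℂ R : ℚ) < (finrank ℂ X : ℚ) := by exact_mod_cast hfr
    linarith), slA1_zero_pos (by
    have : (finrank ℂ R : ℚ) < (finrank ℂ Vs : ℚ) := by exact_mod_cast hRV
    linarith)]

lemma strictAnti_fin1 (g : Fin 1 → ℚ) : StrictAnti g := by
  intro i j hij
  exact absurd (Subsingleton.elim i j) (ne_of_lt hij)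

lemma strictAnti_fin2 (g : Fin 2 → ℚ) (h01 : g 1 < g 0) : StrictAnti g := by
  intro i j hij
  fin_cases i <;> fin_cases j <;> first | exact absurd hij (by decide) | exact h01

lemma strictAnti_fin3 (g : Fin 3 → ℚ) (h01 : g 1 < g 0) (h12 : g 2 < g 1) : StrictAnti g := by
  intro i j hij
  fin_cases i <;> fin_cases j <;>
    first | exact absurd hij (by decide) | exact h01 | exact h12 | exact lt_trans h12 h01

lemma slope_lt_10 {a c : ℚ} (ha : 0 < a) : slA1 c c < slA1 a 0 := by
  rw [slA1_self, slA1_pos_zero ha]; norm_num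

lemma slope_lt_0m1 {b c : ℚ} (hb : 0 < b) : slA1 0 b < slA1 c c := by
  rw [slA1_self, slA1_zero_pos hb]; norm_num

lemma slope_lt_1m1 {a b : ℚ} (ha : 0 < a) (hb : 0 < b) : slA1 0 b < slA1 a 0 := by
  rw [slA1_zero_pos hb, slA1_pos_zero ha]; norm_num

end ExistLemmas
theorem A1_exists {m n : ℕ} (hm : 0 < m) (hn : 0 < n)
    (A : Matrix (Fin n) (Fin m) ℂ) (B : Matrix (Fin m) (Fin n) ℂ) :
    ∃ (r : ℕ) (U : Fin (r + 1) → Submodule ℂ (Fin m → ℂ))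
      (V : Fin (r + 1) → Submodule ℂ (Fin n → ℂ)), IsHNA1 A B r U V := by
  have hrank : A.rank = finrank ℂ (LinearMap.range A.mulVecLin) := rfl
  have hrn : finrank ℂ (LinearMap.range A.mulVecLin) +
      finrank ℂ (LinearMap.ker A.mulVecLin) = m := by
    rw [LinearMap.finrank_range_add_finrank_ker A.mulVecLin, Module.finrank_fin_fun]
  have hkm : A.rank ≤ m := by omega
  have hkn : A.rank ≤ n := by
    have := Submodule.finrank_le (LinearMap.range A.mulVecLin)
    rw [Module.finrank_fin_fun] at this
    omega
  have frk : finrank ℂ (LinearMap.ker A.mulVecLin) = m - A.rank := by omega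
  have frR : finrank ℂ (LinearMap.range A.mulVecLin) = A.rank := hrank.symm
  have frTm : finrank ℂ (⊤ : Submodule ℂ (Fin m → ℂ)) = m := by
    rw [finrank_top, Module.finrank_fin_fun]
  have frTn : finrank ℂ (⊤ : Submodule ℂ (Fin n → ℂ)) = n := by
    rw [finrank_top, Module.finrank_fin_fun]
  have frBm : finrank ℂ (⊥ : Submodule ℂ (Fin m → ℂ)) = 0 := finrank_bot ℂ _
  have frBn : finrank ℂ (⊥ : Submodule ℂ (Fin n → ℂ)) = 0 := finrank_bot ℂ _
  -- subrepresentation facts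
  have sub00 : IsSubA1 A B ⊥ ⊥ := ⟨by simp, by simp⟩
  have subk0 : IsSubA1 A B (LinearMap.ker A.mulVecLin) ⊥ := by
    constructor
    · rintro _ ⟨x, hx, rfl⟩
      simp [LinearMap.mem_ker.mp hx]
    · simp
  have subtr : IsSubA1 A B ⊤ (LinearMap.range A.mulVecLin) := by
    constructor
    · rintro _ ⟨x, _, rfl⟩
      exact ⟨x, rfl⟩
    · exact le_top
  have subtt : IsSubA1 A B (⊤ : Submodule ℂ (Fin m → ℂ)) ⊤ := ⟨le_top, le_top⟩
  by_cases hk0 : A.rank = 0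
  · -- k = 0 : pattern [1, -1]
    have hr0 : LinearMap.range A.mulVecLin = ⊥ := by
      apply Submodule.finrank_eq_zero.mp
      omega
    refine ⟨2, ![⊥, ⊤, ⊤], ![⊥, ⊥, ⊤], rfl, rfl, rfl, rfl, ?_, ?_, ?_, ?_⟩
    · intro ν; fin_cases ν
      · exact sub00
      · show IsSubA1 A B ⊤ ⊥
        exact ⟨by rw [Submodule.map_top, hr0], by simp⟩
      · exact subtt
    · intro ν; fin_cases ν
      · refine ⟨bot_le, le_rfl, fun h => ?_⟩
        have h1 : (⊥ : Submodule ℂ (Fin m → ℂ)) = ⊤ := h.1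
        rw [h1] at frBm; omega
      · refine ⟨le_rfl, bot_le, fun h => ?_⟩
        have h1 : (⊥ : Submodule ℂ (Fin n → ℂ)) = ⊤ := h.2
        rw [h1] at frBn; omega
    · intro ν; fin_cases ν
      · exact semi_step_one A B ⊥ ⊤ ⊥ ⊥ rfl (by omega)
      · exact semi_step_neg A B ⊥ ⊤ (by omega)
    · refine strictAnti_fin2 _ ?_
      show slA1 ((finrank ℂ (⊤ : Submodule ℂ (Fin m → ℂ)) : ℚ) - (finrank ℂ (⊤ : Submodule ℂ (Fin m → ℂ)) : ℚ))
          ((finrank ℂ (⊤ : Submodule ℂ (Fin n → ℂ)) : ℚ) - (finrank ℂ (⊥ : Submodule ℂ (Fin n → ℂ)) : ℚ)) <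
        slA1 ((finrank ℂ (⊤ : Submodule ℂ (Fin m → ℂ)) : ℚ) - (finrank ℂ (⊥ : Submodule ℂ (Fin m → ℂ)) : ℚ))
          ((finrank ℂ (⊥ : Submodule ℂ (Fin n → ℂ)) : ℚ) - (finrank ℂ (⊥ : Submodule ℂ (Fin n → ℂ)) : ℚ))
      rw [frTm, frTn, frBm, frBn]
      push_cast
      norm_num
      exact slope_lt_1m1 (by exact_mod_cast hm) (by exact_mod_cast hn)
  · by_cases hkmeq : A.rank = m
    · by_cases hkneq : A.rank = n
      · -- k = m = n : single middle step
        have hkb : (⊥ : Submodule ℂ (Fin m → ℂ)) = LinearMap.ker A.mulVecLin := by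
          symm; apply Submodule.finrank_eq_zero.mp; omega
        refine ⟨1, ![⊥, ⊤], ![⊥, ⊤], rfl, rfl, rfl, rfl, ?_, ?_, ?_, ?_⟩
        · intro ν; fin_cases ν
          · exact sub00
          · exact subtt
        · intro ν; fin_cases ν
          refine ⟨bot_le, bot_le, fun h => ?_⟩
          have h1 : (⊥ : Submodule ℂ (Fin m → ℂ)) = ⊤ := h.1
          rw [h1] at frBm; omega
        · intro ν; fin_cases ν
          refine semi_step_zero A B ⊥ hkb ⊤ ⊤ ?_
          rw [frTm, frTn, frBm, frBn]
          have e1 : ((A.rank : ℕ) : ℚ) = (m : ℚ) := by exact_mod_cast hkmeq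
          have e2 : ((A.rank : ℕ) : ℚ) = (n : ℚ) := by exact_mod_cast hkneq
          push_cast
          linarith
        · exact strictAnti_fin1 _
      · -- k = m < n : pattern [0, -1]
        have hkb : (⊥ : Submodule ℂ (Fin m → ℂ)) = LinearMap.ker A.mulVecLin := by
          symm; apply Submodule.finrank_eq_zero.mp; omega
        have hkltn : A.rank < n := by omega
        refine ⟨2, ![⊥, ⊤, ⊤], ![⊥, LinearMap.range A.mulVecLin, ⊤], rfl, rfl, rfl, rfl, ?_, ?_, ?_, ?_⟩
        · intro ν; fin_cases ν
          · exact sub00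
          · exact subtr
          · exact subtt
        · intro ν; fin_cases ν
          · refine ⟨bot_le, bot_le, fun h => ?_⟩
            have h1 : (⊥ : Submodule ℂ (Fin m → ℂ)) = ⊤ := h.1
            rw [h1] at frBm; omega
          · refine ⟨le_rfl, le_top, fun h => ?_⟩
            have h1 : LinearMap.range A.mulVecLin = (⊤ : Submodule ℂ (Fin n → ℂ)) := h.2
            rw [h1] at frR; omega
        · intro ν; fin_cases ν
          · refine semi_step_zero A B ⊥ hkb ⊤ (LinearMap.range A.mulVecLin) ?_
            rw [frTm, frR, frBm, frBn]
            have e1 : ((A.rank : ℕ) : ℚ) = (m : ℚ) := by exact_mod_cast hkmeq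
            push_cast
            linarith
          · exact semi_step_neg A B (LinearMap.range A.mulVecLin) ⊤ (by omega)
        · refine strictAnti_fin2 _ ?_
          show slA1 ((finrank ℂ (⊤ : Submodule ℂ (Fin m → ℂ)) : ℚ) - (finrank ℂ (⊤ : Submodule ℂ (Fin m → ℂ)) : ℚ))
              ((finrank ℂ (⊤ : Submodule ℂ (Fin n → ℂ)) : ℚ) - (finrank ℂ (LinearMap.range A.mulVecLin) : ℚ)) <
            slA1 ((finrank ℂ (⊤ : Submodule ℂ (Fin m → ℂ)) : ℚ) - (finrank ℂ (⊥ : Submodule ℂ (Fin m → ℂ)) : ℚ))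
              ((finrank ℂ (LinearMap.range A.mulVecLin) : ℚ) - (finrank ℂ (⊥ : Submodule ℂ (Fin n → ℂ)) : ℚ))
          rw [frTm, frTn, frBm, frBn, frR]
          push_cast
          norm_num
          rw [show (m : ℚ) = (A.rank : ℚ) from by exact_mod_cast hkmeq.symm]
          apply slope_lt_0m1
          have : (A.rank : ℚ) < (n : ℚ) := by exact_mod_cast hkltn
          linarith
    · by_cases hkneq : A.rank = n
      · -- k = n < m : pattern [1, 0]
        have hkltm : A.rank < m := by omega
        refine ⟨2, ![⊥, LinearMap.ker A.mulVecLin, ⊤], ![⊥, ⊥, ⊤], rfl, rfl, rfl, rfl, ?_, ?_, ?_, ?_⟩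
        · intro ν; fin_cases ν
          · exact sub00
          · exact subk0
          · exact subtt
        · intro ν; fin_cases ν
          · refine ⟨bot_le, le_rfl, fun h => ?_⟩
            have h1 : (⊥ : Submodule ℂ (Fin m → ℂ)) = LinearMap.ker A.mulVecLin := h.1
            rw [← h1] at frk; omega
          · refine ⟨le_top, bot_le, fun h => ?_⟩
            have h1 : (⊥ : Submodule ℂ (Fin n → ℂ)) = ⊤ := h.2
            rw [h1] at frBn; omega
        · intro ν; fin_cases ν
          · exact semi_step_one A B ⊥ (LinearMap.ker A.mulVecLin) ⊥ ⊥ rfl (by omega)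
          · refine semi_step_zero A B (LinearMap.ker A.mulVecLin) rfl ⊤ ⊤ ?_
            rw [frTm, frTn, frk, frBn]
            have e1 : ((A.rank : ℕ) : ℚ) = (n : ℚ) := by exact_mod_cast hkneq
            push_cast [hkm]
            linarith
        · refine strictAnti_fin2 _ ?_
          show slA1 ((finrank ℂ (⊤ : Submodule ℂ (Fin m → ℂ)) : ℚ) - (finrank ℂ (LinearMap.ker A.mulVecLin) : ℚ))
              ((finrank ℂ (⊤ : Submodule ℂ (Fin n → ℂ)) : ℚ) - (finrank ℂ (⊥ : Submodule ℂ (Fin n → ℂ)) : ℚ)) <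
            slA1 ((finrank ℂ (LinearMap.ker A.mulVecLin) : ℚ) - (finrank ℂ (⊥ : Submodule ℂ (Fin m → ℂ)) : ℚ))
              ((finrank ℂ (⊥ : Submodule ℂ (Fin n → ℂ)) : ℚ) - (finrank ℂ (⊥ : Submodule ℂ (Fin n → ℂ)) : ℚ))
          rw [frTm, frTn, frBm, frBn, frk]
          push_cast [hkm]
          norm_num
          rw [show (n : ℚ) = (A.rank : ℚ) from by exact_mod_cast hkneq.symm]
          apply slope_lt_10
          have : (A.rank : ℚ) < (m : ℚ) := by exact_mod_cast hkltm
          linarith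
      · -- 0 < k < m, k < n : pattern [1, 0, -1]
        have hkltm : A.rank < m := by omega
        have hkltn : A.rank < n := by omega
        refine ⟨3, ![⊥, LinearMap.ker A.mulVecLin, ⊤, ⊤],
          ![⊥, ⊥, LinearMap.range A.mulVecLin, ⊤], rfl, rfl, rfl, rfl, ?_, ?_, ?_, ?_⟩
        · intro ν; fin_cases ν
          · exact sub00
          · exact subk0
          · exact subtr
          · exact subtt
        · intro ν; fin_cases ν
          · refine ⟨bot_le, le_rfl, fun h => ?_⟩
            have h1 : (⊥ : Submodule ℂ (Fin m → ℂ)) = LinearMap.ker A.mulVecLin := h.1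
            rw [← h1] at frk; omega
          · refine ⟨le_top, bot_le, fun h => ?_⟩
            have h1 : LinearMap.ker A.mulVecLin = (⊤ : Submodule ℂ (Fin m → ℂ)) := h.1
            rw [h1] at frk; omega
          · refine ⟨le_rfl, le_top, fun h => ?_⟩
            have h1 : LinearMap.range A.mulVecLin = (⊤ : Submodule ℂ (Fin n → ℂ)) := h.2
            rw [h1] at frR; omega
        · intro ν; fin_cases ν
          · exact semi_step_one A B ⊥ (LinearMap.ker A.mulVecLin) ⊥ ⊥ rfl (by omega)
          · refine semi_step_zero A B (LinearMap.ker A.mulVecLin) rfl ⊤ (LinearMap.range A.mulVecLin) ?_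
            rw [frTm, frR, frk, frBn]
            push_cast [hkm]
            ring
          · exact semi_step_neg A B (LinearMap.range A.mulVecLin) ⊤ (by omega)
        · refine strictAnti_fin3 _ ?_ ?_
          · show slA1 ((finrank ℂ (⊤ : Submodule ℂ (Fin m → ℂ)) : ℚ) - (finrank ℂ (LinearMap.ker A.mulVecLin) : ℚ))
                ((finrank ℂ (LinearMap.range A.mulVecLin) : ℚ) - (finrank ℂ (⊥ : Submodule ℂ (Fin n → ℂ)) : ℚ)) <
              slA1 ((finrank ℂ (LinearMap.ker A.mulVecLin) : ℚ) - (finrank ℂ (⊥ : Submodule ℂ (Fin m → ℂ)) : ℚ))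
                ((finrank ℂ (⊥ : Submodule ℂ (Fin n → ℂ)) : ℚ) - (finrank ℂ (⊥ : Submodule ℂ (Fin n → ℂ)) : ℚ))
            rw [frTm, frBm, frBn, frk, frR]
            push_cast [hkm]
            norm_num
            apply slope_lt_10
            have : (A.rank : ℚ) < (m : ℚ) := by exact_mod_cast hkltm
            linarith
          · show slA1 ((finrank ℂ (⊤ : Submodule ℂ (Fin m → ℂ)) : ℚ) - (finrank ℂ (⊤ : Submodule ℂ (Fin m → ℂ)) : ℚ))
                ((finrank ℂ (⊤ : Submodule ℂ (Fin n → ℂ)) : ℚ) - (finrank ℂ (LinearMap.range A.mulVecLin) : ℚ)) <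
              slA1 ((finrank ℂ (⊤ : Submodule ℂ (Fin m → ℂ)) : ℚ) - (finrank ℂ (LinearMap.ker A.mulVecLin) : ℚ))
                ((finrank ℂ (LinearMap.range A.mulVecLin) : ℚ) - (finrank ℂ (⊥ : Submodule ℂ (Fin n → ℂ)) : ℚ))
            rw [frTm, frTn, frBn, frk, frR]
            push_cast [hkm]
            norm_num
            apply slope_lt_0m1
            have : (A.rank : ℚ) < (n : ℚ) := by exact_mod_cast hkltn
            linarith


/-- for `Ã₁` with `θ = (1,−1)` and `m, n > 0`, every
representation `(A,B)` has a HN filtration, and the type of any HN filtration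
of `(A,B)` is exactly `d*(rank A)`; hence the HN types are exactly the
`d*(k)`, `0 ≤ k ≤ min(m,n)`, and the stratum of type `d*(k)` is
`{(A,B) : rank A = k}`. -/
theorem A1_HN_types (m n : ℕ) (hm : 0 < m) (hn : 0 < n)
    (A : Matrix (Fin n) (Fin m) ℂ) (B : Matrix (Fin m) (Fin n) ℂ) :
    (∃ (r : ℕ) (U : Fin (r + 1) → Submodule ℂ (Fin m → ℂ))
        (V : Fin (r + 1) → Submodule ℂ (Fin n → ℂ)), IsHNA1 A B r U V) ∧
    (∀ (r : ℕ) (U : Fin (r + 1) → Submodule ℂ (Fin m → ℂ))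
        (V : Fin (r + 1) → Submodule ℂ (Fin n → ℂ)), IsHNA1 A B r U V →
      List.ofFn (fun ν : Fin r =>
          ((finrank ℂ (U ν.succ) - finrank ℂ (U ν.castSucc),
            finrank ℂ (V ν.succ) - finrank ℂ (V ν.castSucc)) : ℕ × ℕ)) =
        dstar m n A.rank) := by
  constructor
  · exact A1_exists hm hn A B
  · intro r U V h
    exact A1_type hm hn A B r U V h
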